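/- Let A₁ be an n×n real symmetric matrix of block form [[0_s, P],[Pᵀ, 0_{n−s}]], let A₂ be an m×m real symmetric matrix, let D = diag(I_s, −I_{n−s}), and set 𝒜 = A₁⊗I_m + D⊗A₂. Let λ ≠ 0 and μ be real numbers such that λ² is an eigenvalue of A₁² with multiplicity p and μ² is an eigenvalue of A₂² with multiplicity q. Then √(λ² + μ²) and −√(λ² + μ²) are eigenvalues of 𝒜, each with multiplicity at least p·q/2; that is, dim ker(𝒜 − √(λ²+μ²)·I_{mn}) ≥ p·q/2 and dim ker(𝒜 + √(λ²+μ²)·I_{mn}) ≥ p·q/2. -/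

import Mathlib

/-!
Since `D` is an involution anticommuting with `A₁`, it exchanges the `ν`- and `(-ν)`-eigenspaces
of `A₁`; the `λ²`-eigenspace of `A₁²` is their sum, so its dimension is at most twice that of the
`ν`-eigenspace, for either `ν = ±λ`. If `A₁ x = ν x`, `A₂² w = μ² w` and `θ² = ν² + μ²`, then
`(ν + θ) x ⊗ w + D x ⊗ A₂ w` is a `θ`-eigenvector of `𝒜`, and `A₁ ⊗ I + ν` maps it to
`2ν(ν + θ) x ⊗ w`. Choosing the sign of `ν` so that `ν + θ ≠ 0`, these eigenvectors are linearly
independent as `x` and `w` run through bases, which gives the bound for both `θ = ±√(λ² + μ²)`.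
-/

open Matrix Kronecker TensorProduct Module Module.End

section KroneckerVec

variable {R : Type*} [CommSemiring R] {n m : Type*}

def kroneckerVec : (n → R) →ₗ[R] (m → R) →ₗ[R] (n × m → R) :=
  LinearMap.mk₂ R (fun x w p => x p.1 * w p.2)
    (fun _ _ _ => by funext; simp [add_mul]) (fun _ _ _ => by funext; simp [mul_assoc])
    (fun _ _ _ => by funext; simp [mul_add]) (fun _ _ _ => by funext; simp [mul_left_comm])

@[simp]
lemma kroneckerVec_apply (x : n → R) (w : m → R) (p : n × m) :
    kroneckerVec x w p = x p.1 * w p.2 :=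
  rfl

lemma kronecker_mulVec_kroneckerVec {l k : Type*} [Fintype n] [Fintype m]
    (A : Matrix l n R) (B : Matrix k m R) (x : n → R) (w : m → R) :
    (A ⊗ₖ B) *ᵥ kroneckerVec x w = kroneckerVec (A *ᵥ x) (B *ᵥ w) := by
  ext p
  simp only [mulVec, dotProduct, kroneckerMap_apply, kroneckerVec_apply, Fintype.sum_prod_type,
    Finset.sum_mul_sum]
  exact Finset.sum_congr rfl fun _ _ => Finset.sum_congr rfl fun _ _ => by ring

lemma lift_kroneckerVec_injective [Finite n] [Finite m] :
    Function.Injective (lift (kroneckerVec : (n → R) →ₗ[R] (m → R) →ₗ[R] (n × m → R))) := by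
  have : lift (kroneckerVec : (n → R) →ₗ[R] (m → R) →ₗ[R] (n × m → R)) =
      ((TensorProduct.congr (Finsupp.linearEquivFunOnFinite R R n).symm
        (Finsupp.linearEquivFunOnFinite R R m).symm ≪≫ₗ finsuppTensorFinsupp' R n m) ≪≫ₗ
        Finsupp.linearEquivFunOnFinite R R (n × m)).toLinearMap := by
    ext x w ⟨i, j⟩
    simp
  rw [this]
  exact LinearEquiv.injective _

end KroneckerVec

lemma linearIndependent_kroneckerVec {K : Type*} [Field K] {n m ι κ : Type*}
    [Finite n] [Finite m] {x : ι → n → K} {w : κ → m → K}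
    (hx : LinearIndependent K x) (hw : LinearIndependent K w) :
    LinearIndependent K fun k : ι × κ => kroneckerVec (x k.1) (w k.2) := by
  simpa [Function.comp_def] using
    (hx.tmul_of_isDomain hw).map' _ (LinearMap.ker_eq_bot.2 lift_kroneckerVec_injective)

lemma ker_mulVecLin_sub_smul_one {R n : Type*} [CommRing R] [Fintype n] [DecidableEq n]
    (A : Matrix n n R) (c : R) :
    LinearMap.ker (A - c • (1 : Matrix n n R)).mulVecLin = eigenspace (toLin' A) c := by
  ext x
  simp [sub_eq_zero]

lemma mem_eigenspace_toLin'_sq {R n : Type*} [CommRing R] [Fintype n] [DecidableEq n]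
    {A : Matrix n n R} {c : R} {x : n → R} :
    x ∈ eigenspace (toLin' (A ^ 2)) c ↔ A *ᵥ (A *ᵥ x) = c • x := by
  rw [mem_eigenspace_iff, toLin'_apply, pow_two, mulVec_mulVec]

section Anticommuting

variable {K n : Type*} [Field K] [Fintype n] {A D : Matrix n n K}

lemma mulVec_eq_neg_smul_of_anticomm (hanti : D * A = -(A * D)) {c : K} {x : n → K}
    (hx : A *ᵥ x = c • x) : A *ᵥ (D *ᵥ x) = (-c) • (D *ᵥ x) := by
  rw [mulVec_mulVec, ← neg_neg (A * D), ← hanti, neg_mulVec, ← mulVec_mulVec, hx, mulVec_smul,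
    neg_smul]

variable [DecidableEq n]

lemma finrank_eigenspace_neg_le (hDD : D * D = 1) (hanti : D * A = -(A * D)) (c : K) :
    finrank K (eigenspace (toLin' A) (-c)) ≤ finrank K (eigenspace (toLin' A) c) := by
  have hle : eigenspace (toLin' A) (-c) ≤ (eigenspace (toLin' A) c).map (toLin' D) := by
    intro x hx
    rw [mem_eigenspace_iff, toLin'_apply] at hx
    refine ⟨D *ᵥ x, ?_, by rw [toLin'_apply, mulVec_mulVec, hDD, one_mulVec]⟩
    rw [SetLike.mem_coe, mem_eigenspace_iff, toLin'_apply,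
      mulVec_eq_neg_smul_of_anticomm hanti hx, neg_neg]
  exact (Submodule.finrank_mono hle).trans (Submodule.finrank_map_le _ _)

variable [NeZero (2 : K)]

lemma eigenspace_sq_le_sup {c : K} (hc : c ≠ 0) :
    eigenspace (toLin' (A ^ 2)) (c ^ 2) ≤
      eigenspace (toLin' A) c ⊔ eigenspace (toLin' A) (-c) := by
  intro x hx
  rw [mem_eigenspace_toLin'_sq] at hx
  refine Submodule.mem_sup.2
    ⟨(2 * c)⁻¹ • (A *ᵥ x + c • x), ?_, (2 * c)⁻¹ • (c • x - A *ᵥ x), ?_, ?_⟩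
  · rw [mem_eigenspace_iff, toLin'_apply, mulVec_smul, mulVec_add, mulVec_smul, hx]
    module
  · rw [mem_eigenspace_iff, toLin'_apply, mulVec_smul, mulVec_sub, mulVec_smul, hx]
    module
  · match_scalars <;> field_simp <;> ring

lemma finrank_eigenspace_sq_le (hDD : D * D = 1) (hanti : D * A = -(A * D)) {c : K}
    (hc : c ≠ 0) :
    finrank K (eigenspace (toLin' (A ^ 2)) (c ^ 2)) ≤ 2 * finrank K (eigenspace (toLin' A) c) :=
  calc finrank K (eigenspace (toLin' (A ^ 2)) (c ^ 2))
      ≤ finrank K ↥(eigenspace (toLin' A) c ⊔ eigenspace (toLin' A) (-c)) :=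
        Submodule.finrank_mono (eigenspace_sq_le_sup hc)
    _ ≤ finrank K (eigenspace (toLin' A) c) + finrank K (eigenspace (toLin' A) (-c)) :=
        Submodule.finrank_add_le_finrank_add_finrank _ _
    _ ≤ 2 * finrank K (eigenspace (toLin' A) c) := by
        linarith [finrank_eigenspace_neg_le hDD hanti c]

end Anticommuting

section SignedProduct

variable {K n m : Type*} [Field K] [Fintype n] [Fintype m] [DecidableEq m]
  {A₁ D : Matrix n n K} {A₂ : Matrix m m K}

variable (D A₂) in
def signedProductEigenvector (ν θ : K) (x : n → K) (w : m → K) : n × m → K :=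
  (ν + θ) • kroneckerVec x w + kroneckerVec (D *ᵥ x) (A₂ *ᵥ w)

lemma kronecker_one_mulVec_signedProductEigenvector (hanti : D * A₁ = -(A₁ * D)) {ν : K}
    (θ : K) {x : n → K} (w : m → K) (hx : A₁ *ᵥ x = ν • x) :
    (A₁ ⊗ₖ (1 : Matrix m m K)) *ᵥ signedProductEigenvector D A₂ ν θ x w +
        ν • signedProductEigenvector D A₂ ν θ x w =
      (2 * ν * (ν + θ)) • kroneckerVec x w := by
  simp only [signedProductEigenvector, mulVec_add, mulVec_smul, kronecker_mulVec_kroneckerVec,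
    one_mulVec, hx, mulVec_eq_neg_smul_of_anticomm hanti hx, map_smul, LinearMap.smul_apply]
  module

variable [DecidableEq n]

lemma signedProduct_mulVec_signedProductEigenvector (hDD : D * D = 1)
    (hanti : D * A₁ = -(A₁ * D)) {ν θ c : K} {x : n → K} {w : m → K} (hx : A₁ *ᵥ x = ν • x)
    (hw : A₂ *ᵥ (A₂ *ᵥ w) = c • w) (hθ : θ ^ 2 = ν ^ 2 + c) :
    (A₁ ⊗ₖ (1 : Matrix m m K) + D ⊗ₖ A₂) *ᵥ signedProductEigenvector D A₂ ν θ x w =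
      θ • signedProductEigenvector D A₂ ν θ x w := by
  have hDx := mulVec_eq_neg_smul_of_anticomm hanti hx
  have hDDx : D *ᵥ (D *ᵥ x) = x := by rw [mulVec_mulVec, hDD, one_mulVec]
  simp only [signedProductEigenvector, add_mulVec, mulVec_add, mulVec_smul,
    kronecker_mulVec_kroneckerVec, one_mulVec, hx, hDx, hDDx, hw, map_smul, LinearMap.smul_apply]
  linear_combination (norm := module) hθ.symm • kroneckerVec x w

lemma finrank_mul_finrank_le_finrank_eigenspace_signedProduct (hDD : D * D = 1)
    (hanti : D * A₁ = -(A₁ * D)) {ν θ c : K} (hθ : θ ^ 2 = ν ^ 2 + c)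
    (hνθ : 2 * ν * (ν + θ) ≠ 0) :
    finrank K (eigenspace (toLin' A₁) ν) * finrank K (eigenspace (toLin' (A₂ ^ 2)) c) ≤
      finrank K (eigenspace (toLin' (A₁ ⊗ₖ (1 : Matrix m m K) + D ⊗ₖ A₂)) θ) := by
  set E₁ := eigenspace (toLin' A₁) ν
  set E₂ := eigenspace (toLin' (A₂ ^ 2)) c
  let b₁ := finBasis K E₁
  let b₂ := finBasis K E₂
  have hx (i) : A₁ *ᵥ b₁ i = ν • b₁ i := by
    rw [← toLin'_apply]
    exact mem_eigenspace_iff.1 (b₁ i).2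
  have hw (j) : A₂ *ᵥ (A₂ *ᵥ b₂ j) = c • b₂ j := mem_eigenspace_toLin'_sq.1 (b₂ j).2
  let u (k : Fin (finrank K E₁) × Fin (finrank K E₂)) : n × m → K :=
    signedProductEigenvector D A₂ ν θ (b₁ k.1) (b₂ k.2)
  have hb₁ : LinearIndependent K fun i => (b₁ i : n → K) :=
    b₁.linearIndependent.map' E₁.subtype E₁.ker_subtype
  have hb₂ : LinearIndependent K fun j => (b₂ j : m → K) :=
    b₂.linearIndependent.map' E₂.subtype E₂.ker_subtype
  have hv := linearIndependent_kroneckerVec hb₁ hb₂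
  have hu : LinearIndependent K u := by
    refine LinearIndependent.of_comp
      ((2 * ν * (ν + θ))⁻¹ • ((A₁ ⊗ₖ (1 : Matrix m m K)).mulVecLin + ν • LinearMap.id)) ?_
    convert hv using 1
    funext k
    simp only [Function.comp_apply, LinearMap.smul_apply, LinearMap.add_apply, mulVecLin_apply,
      LinearMap.id_apply, u]
    rw [kronecker_one_mulVec_signedProductEigenvector hanti θ _ (hx k.1), smul_smul,
      inv_mul_cancel₀ hνθ, one_smul]
  have hspan : Submodule.span K (Set.range u) ≤
      eigenspace (toLin' (A₁ ⊗ₖ (1 : Matrix m m K) + D ⊗ₖ A₂)) θ := by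
    rw [Submodule.span_le]
    rintro _ ⟨k, rfl⟩
    rw [SetLike.mem_coe, mem_eigenspace_iff, toLin'_apply]
    exact signedProduct_mulVec_signedProductEigenvector hDD hanti (hx k.1) (hw k.2) hθ
  simpa [finrank_span_eq_card hu] using Submodule.finrank_mono hspan

lemma finrank_mul_finrank_le_two_mul_finrank_eigenspace_signedProduct [NeZero (2 : K)]
    (hDD : D * D = 1) (hanti : D * A₁ = -(A₁ * D)) {lam θ c : K} (hlam : lam ≠ 0)
    (hθ : θ ^ 2 = lam ^ 2 + c) :
    finrank K (eigenspace (toLin' (A₁ ^ 2)) (lam ^ 2)) *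
        finrank K (eigenspace (toLin' (A₂ ^ 2)) c) ≤
      2 * finrank K (eigenspace (toLin' (A₁ ⊗ₖ (1 : Matrix m m K) + D ⊗ₖ A₂)) θ) := by
  obtain ⟨ν, hν, hν0, hνθ⟩ : ∃ ν : K, ν ^ 2 = lam ^ 2 ∧ ν ≠ 0 ∧ ν + θ ≠ 0 := by
    by_cases h : lam + θ = 0
    · refine ⟨-lam, neg_sq lam, neg_ne_zero.2 hlam, fun h' => hlam ?_⟩
      have : (2 : K) * lam = 0 := by linear_combination h - h'
      exact (mul_eq_zero.1 this).resolve_left two_ne_zero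
    · exact ⟨lam, rfl, hlam, h⟩
  rw [← hν] at hθ ⊢
  calc finrank K (eigenspace (toLin' (A₁ ^ 2)) (ν ^ 2)) *
        finrank K (eigenspace (toLin' (A₂ ^ 2)) c)
      ≤ 2 * finrank K (eigenspace (toLin' A₁) ν) * finrank K (eigenspace (toLin' (A₂ ^ 2)) c) :=
        Nat.mul_le_mul_right _ (finrank_eigenspace_sq_le hDD hanti hν0)
    _ ≤ 2 * finrank K (eigenspace (toLin' (A₁ ⊗ₖ (1 : Matrix m m K) + D ⊗ₖ A₂)) θ) := by
        rw [mul_assoc]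
        exact Nat.mul_le_mul_left 2 (finrank_mul_finrank_le_finrank_eigenspace_signedProduct
          hDD hanti hθ (mul_ne_zero (mul_ne_zero two_ne_zero hν0) hνθ))

end SignedProduct

theorem eigenvalue_pm_sqrt_of_signed_cartesian_product_general (s t m : ℕ)
    (P : Matrix (Fin s) (Fin t) ℝ)
    (A₂ : Matrix (Fin m) (Fin m) ℝ)
    (A₁ : Matrix (Fin s ⊕ Fin t) (Fin s ⊕ Fin t) ℝ)
    (hA₁ : A₁ = Matrix.fromBlocks 0 P Pᵀ 0)
    (D : Matrix (Fin s ⊕ Fin t) (Fin s ⊕ Fin t) ℝ)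
    (hD : D = Matrix.fromBlocks 1 0 0 (-1))
    (𝒜 : Matrix ((Fin s ⊕ Fin t) × Fin m) ((Fin s ⊕ Fin t) × Fin m) ℝ)
    (h𝒜 : 𝒜 = A₁ ⊗ₖ (1 : Matrix (Fin m) (Fin m) ℝ) + D ⊗ₖ A₂)
    (lam mu : ℝ) (hlam : lam ≠ 0) (p q : ℕ)
    (hp : Module.finrank ℝ (LinearMap.ker (A₁ ^ 2 - (lam ^ 2) •
      (1 : Matrix (Fin s ⊕ Fin t) (Fin s ⊕ Fin t) ℝ)).mulVecLin) = p)
    (hq : Module.finrank ℝ (LinearMap.ker (A₂ ^ 2 - (mu ^ 2) •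
      (1 : Matrix (Fin m) (Fin m) ℝ)).mulVecLin) = q) :
    p * q ≤ 2 * Module.finrank ℝ (LinearMap.ker (𝒜 - Real.sqrt (lam ^ 2 + mu ^ 2) •
      (1 : Matrix ((Fin s ⊕ Fin t) × Fin m) ((Fin s ⊕ Fin t) × Fin m) ℝ)).mulVecLin) ∧
    p * q ≤ 2 * Module.finrank ℝ (LinearMap.ker (𝒜 + Real.sqrt (lam ^ 2 + mu ^ 2) •
      (1 : Matrix ((Fin s ⊕ Fin t) × Fin m) ((Fin s ⊕ Fin t) × Fin m) ℝ)).mulVecLin) := by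
  have hDD : D * D = 1 := by
    rw [hD, ← fromBlocks_one]
    simp [fromBlocks_multiply]
  have hanti : D * A₁ = -(A₁ * D) := by
    rw [hD, hA₁]
    simp [fromBlocks_multiply, fromBlocks_neg]
  have key (θ : ℝ) (hθ : θ ^ 2 = lam ^ 2 + mu ^ 2) :
      p * q ≤ 2 * finrank ℝ (LinearMap.ker (𝒜 - θ •
        (1 : Matrix ((Fin s ⊕ Fin t) × Fin m) ((Fin s ⊕ Fin t) × Fin m) ℝ)).mulVecLin) := by
    rw [← hp, ← hq, h𝒜, ker_mulVecLin_sub_smul_one, ker_mulVecLin_sub_smul_one, ker_mulVecLin_sub_smul_one]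
    exact finrank_mul_finrank_le_two_mul_finrank_eigenspace_signedProduct hDD hanti hlam hθ
  have hsq : √(lam ^ 2 + mu ^ 2) ^ 2 = lam ^ 2 + mu ^ 2 := Real.sq_sqrt (by positivity)
  refine ⟨key _ hsq, ?_⟩
  rw [← sub_neg_eq_add, ← neg_smul]
  exact key _ (by rw [neg_sq, hsq])

/-- If `λ ≠ 0` and `λ²` is an eigenvalue of `A₁²` with multiplicity `p`, where
`A₁ = [[0,P],[Pᵀ,0]]`, and `μ²` is an eigenvalue of the symmetric matrix `A₂²` with
multiplicity `q`, then `√(λ² + μ²)` and `−√(λ² + μ²)` are eigenvalues of the signed Cartesian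
product `𝒜 = A₁ ⊗ I_m + D ⊗ A₂`, each with multiplicity at least `p·q/2`. -/
theorem eigenvalue_pm_sqrt_of_signed_cartesian_product (s t m : ℕ)
    (P : Matrix (Fin s) (Fin t) ℝ)
    (A₂ : Matrix (Fin m) (Fin m) ℝ) (hA₂symm : A₂.IsSymm)
    (A₁ : Matrix (Fin s ⊕ Fin t) (Fin s ⊕ Fin t) ℝ)
    (hA₁ : A₁ = Matrix.fromBlocks 0 P Pᵀ 0)
    (D : Matrix (Fin s ⊕ Fin t) (Fin s ⊕ Fin t) ℝ)
    (hD : D = Matrix.fromBlocks 1 0 0 (-1))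
    (𝒜 : Matrix ((Fin s ⊕ Fin t) × Fin m) ((Fin s ⊕ Fin t) × Fin m) ℝ)
    (h𝒜 : 𝒜 = A₁ ⊗ₖ (1 : Matrix (Fin m) (Fin m) ℝ) + D ⊗ₖ A₂)
    (lam mu : ℝ) (hlam : lam ≠ 0) (p q : ℕ) (hp0 : 0 < p) (hq0 : 0 < q)
    (hp : Module.finrank ℝ (LinearMap.ker (A₁ ^ 2 - (lam ^ 2) •
      (1 : Matrix (Fin s ⊕ Fin t) (Fin s ⊕ Fin t) ℝ)).mulVecLin) = p)
    (hq : Module.finrank ℝ (LinearMap.ker (A₂ ^ 2 - (mu ^ 2) •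
      (1 : Matrix (Fin m) (Fin m) ℝ)).mulVecLin) = q) :
    p * q ≤ 2 * Module.finrank ℝ (LinearMap.ker (𝒜 - Real.sqrt (lam ^ 2 + mu ^ 2) •
      (1 : Matrix ((Fin s ⊕ Fin t) × Fin m) ((Fin s ⊕ Fin t) × Fin m) ℝ)).mulVecLin) ∧
    p * q ≤ 2 * Module.finrank ℝ (LinearMap.ker (𝒜 + Real.sqrt (lam ^ 2 + mu ^ 2) •
      (1 : Matrix ((Fin s ⊕ Fin t) × Fin m) ((Fin s ⊕ Fin t) × Fin m) ℝ)).mulVecLin) :=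
  eigenvalue_pm_sqrt_of_signed_cartesian_product_general s t m P A₂ A₁ hA₁ D hD 𝒜 h𝒜 lam mu hlam p q
    hp hq
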